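/- arXiv:2101.01589 — 2 statements merged into one kernel-verified Lean document; each statement's English description precedes it below -/
import Mathlib

section
/- Let λ > 0 and let a be a nonzero complex number with |arg a| < π/4. Then ∑_{n=1}^∞ n² e^{−λn²/a²} = (√π · a³)/(4 λ^{3/2}) − (πa²/λ)^{5/2} · ∑_{k=1}^∞ (k² − λ/(2π²a²)) e^{−π²k²a²/λ}. -/
/-!
Write `θ(t) = ∑_{n ∈ ℤ} exp(-π t n²)` for `re t > 0`. Poisson summation gives Jacobi's
transformation formula `θ(1/s) = s^{1/2} θ(s)`. Differentiating it in `s` term by term turns it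
into a transformation formula for the second moment `∑ n² exp(-π n²/s)`, in which
`s^{3/2} θ(s)` appears through the derivative of `s^{1/2}`. Folding the even sums over `ℤ` onto
`n ≥ 1` and putting `s = π a²/λ` gives the theorem; `|arg a| < π/4` is what makes
`re s > 0` and `(a²)^{3/2} = a³`.
-/

open Real Complex Filter Topology

lemma norm_cexp_neg_pi_mul_sq (z : ℂ) (n : ℤ) :
    ‖cexp (-π * z * n ^ 2)‖ = rexp (-π * z.re * n ^ 2) := by
  rw [norm_exp, (by push_cast; ring : -π * z * n ^ 2 = ((-π * n ^ 2 : ℝ) : ℂ) * z), re_ofReal_mul]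
  ring_nf

lemma summable_pow_mul_rexp_neg_pi_mul_sq (k : ℕ) {T : ℝ} (hT : 0 < T) :
    Summable fun n : ℤ ↦ |(n : ℝ)| ^ k * rexp (-π * T * n ^ 2) := by
  simpa [mul_assoc] using summable_pow_mul_jacobiTheta₂_term_bound 0 hT k

lemma summable_pow_mul_cexp_neg_pi_mul_sq (k : ℕ) {t : ℂ} (ht : 0 < t.re) :
    Summable fun n : ℤ ↦ (n : ℂ) ^ k * cexp (-π * t * n ^ 2) := by
  refine (summable_pow_mul_rexp_neg_pi_mul_sq k ht).of_norm_bounded fun n ↦ le_of_eq ?_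
  rw [norm_mul, norm_pow, norm_intCast, norm_cexp_neg_pi_mul_sq]

lemma hasDerivAt_tsum_cexp_neg_pi_mul_sq {t : ℂ} (ht : 0 < t.re) :
    HasDerivAt (fun z ↦ ∑' n : ℤ, cexp (-π * z * n ^ 2))
      (-π * ∑' n : ℤ, (n : ℂ) ^ 2 * cexp (-π * t * n ^ 2)) t := by
  obtain ⟨T, hT, hTt⟩ := exists_between ht
  have hderiv (n : ℤ) (z : ℂ) (_ : z ∈ {z : ℂ | T < z.re}) :
      HasDerivAt (fun z ↦ cexp (-π * z * n ^ 2)) (-π * n ^ 2 * cexp (-π * z * n ^ 2)) z := by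
    simpa [mul_comm] using ((hasDerivAt_id z).const_mul (-π : ℂ)).mul_const ((n : ℂ) ^ 2) |>.cexp
  have hbound (n : ℤ) (z : ℂ) (hz : z ∈ {z : ℂ | T < z.re}) :
      ‖-π * n ^ 2 * cexp (-π * z * n ^ 2)‖ ≤ π * (|(n : ℝ)| ^ 2 * rexp (-π * T * n ^ 2)) := by
    rw [norm_mul, norm_cexp_neg_pi_mul_sq, norm_mul, norm_neg, norm_real, norm_pow, norm_intCast,
      Real.norm_of_nonneg pi_pos.le, mul_assoc]
    gcongr _ * (_ * rexp ?_)
    simp only [neg_mul, neg_le_neg_iff]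
    gcongr
    exact hz.le
  have := hasDerivAt_tsum_of_isPreconnected
    ((summable_pow_mul_rexp_neg_pi_mul_sq 2 hT).mul_left π)
    (isOpen_lt continuous_const continuous_re) (convex_halfSpace_re_gt T).isPreconnected
    hderiv hbound hTt (by simpa using summable_pow_mul_cexp_neg_pi_mul_sq 0 ht) hTt
  simpa only [mul_assoc, tsum_mul_left] using this

theorem tsum_sq_mul_cexp_neg_pi_div_mul_sq {s : ℂ} (hs : 0 < s.re) :
    ∑' n : ℤ, (n : ℂ) ^ 2 * cexp (-π / s * n ^ 2)
      = s ^ (3 / 2 : ℂ) / (2 * π) * ∑' n : ℤ, cexp (-π * s * n ^ 2)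
        - s ^ (5 / 2 : ℂ) * ∑' n : ℤ, (n : ℂ) ^ 2 * cexp (-π * s * n ^ 2) := by
  have hs0 : s ≠ 0 := by rintro rfl; simp at hs
  have hs' : 0 < s⁻¹.re := by rw [inv_re]; exact div_pos hs (normSq_pos.mpr hs0)
  set θ := fun z : ℂ ↦ ∑' n : ℤ, cexp (-π * z * n ^ 2)
  have hjacobi : (fun z ↦ z ^ (1 / 2 : ℂ) * θ z) =ᶠ[𝓝 s] fun z ↦ θ z⁻¹ := by
    filter_upwards [(isOpen_lt continuous_const continuous_re).mem_nhds hs] with z hz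
    have hz0 : z ^ (1 / 2 : ℂ) ≠ 0 := by
      rw [Ne, cpow_eq_zero_iff]; rintro ⟨rfl, -⟩; simp at hz
    simp only [θ]
    rw [Complex.tsum_exp_neg_mul_int_sq hz, ← mul_assoc, mul_one_div_cancel hz0, one_mul]
    simp only [div_eq_mul_inv]
  have hderiv_inv := (hasDerivAt_tsum_cexp_neg_pi_mul_sq hs').comp s (hasDerivAt_inv hs0)
  have hderiv_mul := (((hasDerivAt_id s).cpow_const (c := 1 / 2) (.inl hs)).mul
    (hasDerivAt_tsum_cexp_neg_pi_mul_sq hs)).congr_of_eventuallyEq hjacobi.symm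
  have hderiv_eq := hderiv_mul.unique hderiv_inv
  have h3 : s ^ (3 / 2 : ℂ) = s ^ 2 * s ^ (1 / 2 - 1 : ℂ) := by
    rw [← cpow_ofNat, ← cpow_add _ _ hs0]; norm_num
  have h5 : s ^ (5 / 2 : ℂ) = s ^ 2 * s ^ (1 / 2 : ℂ) := by
    rw [← cpow_ofNat, ← cpow_add _ _ hs0]; norm_num
  have hdiv (n : ℤ) : -π / s * n ^ 2 = -π * s⁻¹ * n ^ 2 := by ring
  simp only [hdiv, h3, h5]
  simp only [id, mul_one] at hderiv_eq
  field_simp at hderiv_eq ⊢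
  linear_combination -hderiv_eq

lemma tsum_int_comp_sq_eq_add_two_nsmul {E : Type*} [NormedAddCommGroup E] [CompleteSpace E]
    {g : ℂ → E} (hg : Summable fun n : ℤ ↦ g ((n : ℂ) ^ 2)) :
    ∑' n : ℤ, g ((n : ℂ) ^ 2) = g 0 + 2 • ∑' n : ℕ, g (((n : ℂ) + 1) ^ 2) := by
  rw [tsum_int_eq_zero_add_two_mul_tsum_pnat (fun n ↦ by simp) hg,
    tsum_pnat_eq_tsum_succ (f := fun n : ℕ ↦ g (((n : ℤ) : ℂ) ^ 2))]
  simp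

theorem tsum_nat_sq_mul_cexp_neg_pi_div_mul_sq {s : ℂ} (hs : 0 < s.re) :
    ∑' n : ℕ, ((n : ℂ) + 1) ^ 2 * cexp (-π / s * ((n : ℂ) + 1) ^ 2)
      = s ^ (3 / 2 : ℂ) / (4 * π) - s ^ (5 / 2 : ℂ) *
        ∑' k : ℕ, (((k : ℂ) + 1) ^ 2 - 1 / (2 * π * s)) * cexp (-π * s * ((k : ℂ) + 1) ^ 2) := by
  have hs0 : s ≠ 0 := by rintro rfl; simp at hs
  have hs' : 0 < s⁻¹.re := by rw [inv_re]; exact div_pos hs (normSq_pos.mpr hs0)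
  set c : ℂ := 1 / (2 * π * s)
  have hΘ := summable_pow_mul_cexp_neg_pi_mul_sq 0 hs
  have hA := summable_pow_mul_cexp_neg_pi_mul_sq 2 hs
  have hL := tsum_int_comp_sq_eq_add_two_nsmul (g := fun x ↦ x * cexp (-π / s * x))
    (by simpa [div_eq_mul_inv] using summable_pow_mul_cexp_neg_pi_mul_sq 2 hs')
  have hR := tsum_int_comp_sq_eq_add_two_nsmul (g := fun x ↦ (x - c) * cexp (-π * s * x))
    ((hA.sub (hΘ.mul_left c)).congr fun n ↦ by ring)
  have hsplit : ∑' n : ℤ, ((n : ℂ) ^ 2 - c) * cexp (-π * s * n ^ 2)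
      = ∑' n : ℤ, (n : ℂ) ^ 2 * cexp (-π * s * n ^ 2) - c * ∑' n : ℤ, cexp (-π * s * n ^ 2) := by
    rw [← tsum_mul_left, ← hA.tsum_sub (by simpa using hΘ.mul_left c)]
    exact tsum_congr fun n ↦ by ring
  have h5 : s ^ (5 / 2 : ℂ) = s * s ^ (3 / 2 : ℂ) := by
    rw [show (5 / 2 : ℂ) = 1 + 3 / 2 by norm_num, cpow_add _ _ hs0, cpow_one]
  have hc : s * c = 1 / (2 * π) := by
    simp only [c]
    field_simp
  have hmain := tsum_sq_mul_cexp_neg_pi_div_mul_sq hs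
  simp only [mul_zero, Complex.exp_zero, zero_add, mul_one, nsmul_eq_mul,
    Nat.cast_ofNat] at hL hR
  rw [hsplit] at hR
  linear_combination (-1 / 2 : ℂ) * hL + (1 / 2 : ℂ) * hmain
    - (s ^ (5 / 2 : ℂ) / 2) * hR - ((∑' n : ℤ, cexp (-π * s * n ^ 2)) - 1) * (c / 2) * h5
    - ((∑' n : ℤ, cexp (-π * s * n ^ 2)) - 1) * (s ^ (3 / 2 : ℂ) / 2) * hc

lemma re_sq_pos_of_abs_arg_lt {a : ℂ} (ha : a ≠ 0) (harg : |a.arg| < π / 4) : 0 < (a ^ 2).re := by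
  have hcos : 0 < Real.cos (2 * a.arg) := by
    obtain ⟨h₁, h₂⟩ := abs_lt.mp harg
    exact Real.cos_pos_of_mem_Ioo ⟨by linarith, by linarith⟩
  rw [← norm_mul_exp_arg_mul_I a, mul_pow, ← Complex.exp_nat_mul, ← ofReal_pow,
    re_ofReal_mul, (by push_cast; ring : ((2 : ℕ) : ℂ) * (a.arg * I) = (2 * a.arg : ℝ) * I),
    exp_ofReal_mul_I_re]
  have := norm_pos_iff.mpr ha
  positivity

lemma ofReal_mul_cpow {r : ℝ} (hr : 0 ≤ r) (w s : ℂ) : ((r : ℂ) * w) ^ s = (r : ℂ) ^ s * w ^ s := by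
  rcases eq_or_ne s 0 with rfl | hs
  · simp
  rcases hr.eq_or_lt with rfl | hr
  · simp [zero_cpow hs]
  rcases eq_or_ne w 0 with rfl | hw
  · simp [zero_cpow hs]
  have hr0 : (r : ℂ) ≠ 0 := ofReal_ne_zero.mpr hr.ne'
  rw [cpow_def_of_ne_zero (mul_ne_zero hr0 hw), cpow_def_of_ne_zero hr0, cpow_def_of_ne_zero hw,
    log_ofReal_mul hr hw, add_mul, Complex.exp_add, ofReal_log hr.le]

lemma sq_cpow_three_halves {a : ℂ} (harg : |a.arg| < π / 2) : (a ^ 2) ^ (3 / 2 : ℂ) = a ^ 3 := by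
  obtain ⟨h₁, h₂⟩ := abs_lt.mp harg
  rw [← cpow_ofNat_mul' (by linarith) (by linarith), ← cpow_ofNat]
  norm_num

lemma ofReal_mul_sq_cpow_three_halves {r : ℝ} (hr : 0 ≤ r) {a : ℂ} (harg : |a.arg| < π / 2) :
    ((r : ℂ) * a ^ 2) ^ (3 / 2 : ℂ) = (r ^ (3 / 2 : ℝ) : ℝ) * a ^ 3 := by
  rw [ofReal_mul_cpow hr, sq_cpow_three_halves harg, ofReal_cpow hr]
  norm_num

lemma rpow_three_halves {r : ℝ} (hr : 0 ≤ r) : r ^ (3 / 2 : ℝ) = r * √r := by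
  rw [show (3 / 2 : ℝ) = 1 + 1 / 2 by norm_num, Real.rpow_add' hr (by norm_num), Real.rpow_one,
    Real.sqrt_eq_rpow]

/-- For `λ > 0` and nonzero complex `a` with `|arg a| < π/4`,
`∑_{n≥1} n² e^{-λn²/a²} = √π a³/(4λ^{3/2}) - (πa²/λ)^{5/2} ∑_{k≥1}(k² - λ/(2π²a²))e^{-π²k²a²/λ}`. -/
theorem mathieu_gaussian_p_one (lam : ℝ) (hlam : 0 < lam) (a : ℂ) (ha : a ≠ 0)
    (harg : |a.arg| < π / 4) :
    ∑' n : ℕ, ((n : ℂ) + 1) ^ 2 * Complex.exp (-(lam : ℂ) * ((n : ℂ) + 1) ^ 2 / a ^ 2)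
      = (Real.sqrt π : ℂ) * a ^ 3 / (4 * ((lam ^ ((3 : ℝ) / 2) : ℝ) : ℂ))
        - ((π : ℂ) * a ^ 2 / (lam : ℂ)) ^ ((5 : ℂ) / 2) *
          ∑' k : ℕ, (((k : ℂ) + 1) ^ 2 - (lam : ℂ) / (2 * (π : ℂ) ^ 2 * a ^ 2)) *
            Complex.exp (-(π : ℂ) ^ 2 * ((k : ℂ) + 1) ^ 2 * a ^ 2 / (lam : ℂ)) := by
  have hs_eq : (π : ℂ) * a ^ 2 / lam = ((π / lam : ℝ) : ℂ) * a ^ 2 := by push_cast; ring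
  set s : ℂ := π * a ^ 2 / lam
  have hs : 0 < s.re := by
    rw [hs_eq, re_ofReal_mul]
    exact mul_pos (by positivity) (re_sq_pos_of_abs_arg_lt ha harg)
  have hs32 : s ^ (3 / 2 : ℂ) / (4 * π) = √π * a ^ 3 / (4 * (lam ^ (3 / 2 : ℝ) : ℝ)) := by
    rw [hs_eq, ofReal_mul_sq_cpow_three_halves (by positivity) (by linarith [pi_pos]),
      Real.div_rpow pi_pos.le hlam.le, rpow_three_halves pi_pos.le]
    have : ((lam ^ (3 / 2 : ℝ) : ℝ) : ℂ) ≠ 0 := ofReal_ne_zero.mpr (by positivity)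
    push_cast
    field_simp
  have hexp₁ (x : ℂ) : -(lam : ℂ) * x / a ^ 2 = -π / s * x := by simp only [s]; field_simp
  have hexp₂ (x : ℂ) : -(π : ℂ) ^ 2 * x * a ^ 2 / lam = -π * s * x := by simp only [s]; ring
  have hc : (lam : ℂ) / (2 * π ^ 2 * a ^ 2) = 1 / (2 * π * s) := by simp only [s]; field_simp
  simp only [hexp₁, hexp₂, hc]
  rw [tsum_nat_sq_mul_cexp_neg_pi_div_mul_sq hs, hs32]
end

section
/- Let m ≥ 1 and r ≥ 0 be integers, let p be an integer with m − p ≥ 1, and let λ be a real number. Then ∑_{n=0}^r ((m)_n (−λ)^n / n!) · (2m − 2p + 2n)_{2(r−n)} / (2^{2(r−n)} (r−n)!) = ((2m − 2p)_{2r} / (2^{2r} r!)) · ∑_{n=0}^r ((−r)_n (m)_n λ^n) / (n! (m−p)_n (m−p+1/2)_n). (This expresses the coefficient C_r of the paper as a terminating ₂F₂ hypergeometric sum.) -/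
/-!
The identity holds summand by summand. Writing `x = m - p`, split
`(2x)_{2r} = (2x)_{2n} (2x + 2n)_{2(r-n)}`, use the duplication formula
`(2x)_{2n} = 4^n (x)_n (x + 1/2)_n`, and `(-r)_n = (-1)^n r! / (r - n)!`. Since `x > 0`, the
Pochhammer symbols in the denominators are nonzero.
-/

open Finset

theorem ascPochhammer_eval_add {S : Type*} [CommSemiring S] (x : S) (a b : ℕ) :
    (ascPochhammer S (a + b)).eval x
      = (ascPochhammer S a).eval x * (ascPochhammer S b).eval (x + a) := by
  rw [← ascPochhammer_mul, Polynomial.eval_mul, Polynomial.eval_comp]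
  simp

theorem ascPochhammer_eval_two_mul {K : Type*} [Field K] [CharZero K] (x : K) (n : ℕ) :
    (ascPochhammer K (2 * n)).eval (2 * x)
      = 4 ^ n * (ascPochhammer K n).eval x * (ascPochhammer K n).eval (x + 1 / 2) := by
  induction n with
  | zero => simp
  | succ k ih =>
    rw [show 2 * (k + 1) = 2 * k + 1 + 1 by ring, ascPochhammer_succ_eval, ascPochhammer_succ_eval,
      ascPochhammer_succ_eval, ascPochhammer_succ_eval, ih]
    push_cast
    ring

theorem ascPochhammer_eval_neg_natCast_mul_factorial {R : Type*} [CommRing R] {n k : ℕ}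
    (h : k ≤ n) :
    (ascPochhammer R k).eval (-(n : R)) * ((n - k).factorial : R) = (-1) ^ k * n.factorial := by
  rw [ascPochhammer_eval_neg_eq_descPochhammer, descPochhammer_eval_eq_descFactorial,
    ← Nat.factorial_mul_descFactorial h]
  push_cast
  ring

theorem coefficient_term_eq_mul_2F2_term {K : Type*} [Field K] [CharZero K] (a x lam : K)
    {n r : ℕ} (hnr : n ≤ r) (hx : (ascPochhammer K n).eval x ≠ 0)
    (hx' : (ascPochhammer K n).eval (x + 1 / 2) ≠ 0) :
    (ascPochhammer K n).eval a * (-lam) ^ n / n.factorial *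
        ((ascPochhammer K (2 * (r - n))).eval (2 * x + 2 * n)
          / (2 ^ (2 * (r - n)) * (r - n).factorial))
      = (ascPochhammer K (2 * r)).eval (2 * x) / (2 ^ (2 * r) * r.factorial) *
          ((ascPochhammer K n).eval (-(r : K)) * (ascPochhammer K n).eval a * lam ^ n
            / (n.factorial * (ascPochhammer K n).eval x * (ascPochhammer K n).eval (x + 1 / 2))) := by
  have hr : 2 * r = 2 * n + 2 * (r - n) := by omega
  have hsplit : (ascPochhammer K (2 * r)).eval (2 * x)
      = 4 ^ n * (ascPochhammer K n).eval x * (ascPochhammer K n).eval (x + 1 / 2)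
        * (ascPochhammer K (2 * (r - n))).eval (2 * x + 2 * n) := by
    rw [hr, ascPochhammer_eval_add, ascPochhammer_eval_two_mul]
    push_cast
    ring
  have hfac : ((r - n).factorial : K) ≠ 0 := Nat.cast_ne_zero.mpr (Nat.factorial_ne_zero _)
  have hrfac : (r.factorial : K) ≠ 0 := Nat.cast_ne_zero.mpr (Nat.factorial_ne_zero _)
  have hneg : (ascPochhammer K n).eval (-(r : K)) = (-1) ^ n * r.factorial / (r - n).factorial :=
    eq_div_of_mul_eq hfac (ascPochhammer_eval_neg_natCast_mul_factorial hnr)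
  have hpow : (2 : K) ^ (2 * r) = 4 ^ n * 2 ^ (2 * (r - n)) := by
    rw [hr, pow_add, pow_mul]
    norm_num
  rw [hsplit, hneg, hpow, neg_pow]
  -- otherwise `field_simp` rewrites `x + 1 / 2` in the goal but not in `hx'`
  generalize (ascPochhammer K n).eval (x + 1 / 2) = y at hx' ⊢
  field_simp

theorem coefficient_Cr_as_2F2_general (m : ℕ) (p : ℤ) (hmp : 1 ≤ (m : ℤ) - p)
    (r : ℕ) (lam : ℝ) :
    ∑ n ∈ range (r + 1),
        ((ascPochhammer ℝ n).eval (m : ℝ) * (-lam) ^ n / (n.factorial : ℝ)) *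
          ((ascPochhammer ℝ (2 * (r - n))).eval (2 * (m : ℝ) - 2 * (p : ℝ) + 2 * n)
            / (2 ^ (2 * (r - n)) * ((r - n).factorial : ℝ)))
      = ((ascPochhammer ℝ (2 * r)).eval (2 * (m : ℝ) - 2 * (p : ℝ))
            / (2 ^ (2 * r) * (r.factorial : ℝ))) *
          ∑ n ∈ range (r + 1),
            ((ascPochhammer ℝ n).eval (-(r : ℝ)) * (ascPochhammer ℝ n).eval (m : ℝ) * lam ^ n)
              / ((n.factorial : ℝ) * (ascPochhammer ℝ n).eval ((m : ℝ) - (p : ℝ))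
                  * (ascPochhammer ℝ n).eval ((m : ℝ) - (p : ℝ) + 1 / 2)) := by
  have hpos : (0 : ℝ) < m - p := by exact_mod_cast (show (0 : ℤ) < m - p by omega)
  rw [mul_sum, ← mul_sub]
  refine sum_congr rfl fun n hn ↦ ?_
  exact coefficient_term_eq_mul_2F2_term _ _ _ (mem_range_succ_iff.mp hn)
    (ascPochhammer_pos n _ hpos).ne' (ascPochhammer_pos n _ (by linarith)).ne'

/-- The coefficient `C_r` of the paper as a terminating ₂F₂ sum (equation (4.10)):
for integers `m ≥ 1`, `r ≥ 0` and `p` with `m - p ≥ 1`, and real `λ`,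
`∑_{n=0}^r ((m)_n(-λ)^n/n!) (2m-2p+2n)_{2(r-n)}/(2^{2(r-n)}(r-n)!)
  = ((2m-2p)_{2r}/(2^{2r} r!)) ∑_{n=0}^r ((-r)_n(m)_n λ^n)/(n!(m-p)_n(m-p+1/2)_n)`. -/
theorem coefficient_Cr_as_2F2 (m : ℕ) (hm : 1 ≤ m) (p : ℤ) (hmp : 1 ≤ (m : ℤ) - p)
    (r : ℕ) (lam : ℝ) :
    ∑ n ∈ range (r + 1),
        ((ascPochhammer ℝ n).eval (m : ℝ) * (-lam) ^ n / (n.factorial : ℝ)) *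
          ((ascPochhammer ℝ (2 * (r - n))).eval (2 * (m : ℝ) - 2 * (p : ℝ) + 2 * n)
            / (2 ^ (2 * (r - n)) * ((r - n).factorial : ℝ)))
      = ((ascPochhammer ℝ (2 * r)).eval (2 * (m : ℝ) - 2 * (p : ℝ))
            / (2 ^ (2 * r) * (r.factorial : ℝ))) *
          ∑ n ∈ range (r + 1),
            ((ascPochhammer ℝ n).eval (-(r : ℝ)) * (ascPochhammer ℝ n).eval (m : ℝ) * lam ^ n)
              / ((n.factorial : ℝ) * (ascPochhammer ℝ n).eval ((m : ℝ) - (p : ℝ))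
                  * (ascPochhammer ℝ n).eval ((m : ℝ) - (p : ℝ) + 1 / 2)) :=
  coefficient_Cr_as_2F2_general m p hmp r lam
end
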